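/- arXiv:1311.2130 — 9 statements merged into one kernel-verified Lean document; each statement's English description precedes it below -/
import Mathlib

section
/- Let A, B be n×n complex matrices such that the pencil A - λB is regular (det(A - λ₀B) ≠ 0 for some λ₀ ∈ ℂ). Suppose X, Y ∈ ℂ^{n×k} have full column rank and R, S ∈ ℂ^{k×k} satisfy A X = Y R and B X = Y S. Then the pencil R - λS is regular; moreover every finite eigenvalue of R - λS (a λ with det(R - λS) = 0) is a finite eigenvalue of A - λB, and if Sx = 0, Rx ≠ 0 for some x (so R - λS has an infinite eigenvalue), then B(Xx) = 0 and A(Xx) ≠ 0, so that A - λB has an infinite eigenvalue (in particular det B = 0). -/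
open Matrix

/-- If the pencil `A - λB` is regular, `X, Y` have full column rank and
`A X = Y R`, `B X = Y S`, then the pencil `R - λS` is regular, every finite eigenvalue
of `R - λS` is one of `A - λB`, and an infinite-eigenvalue vector of `R - λS`
yields an infinite-eigenvalue vector of `A - λB`. -/
theorem pencil_restriction_regular
    (n k : ℕ) (A B : Matrix (Fin n) (Fin n) ℂ)
    (hreg : ∃ μ : ℂ, (A - μ • B).det ≠ 0)
    (X Y : Matrix (Fin n) (Fin k) ℂ)
    (hX : Function.Injective X.mulVecLin) (hY : Function.Injective Y.mulVecLin)
    (R S : Matrix (Fin k) (Fin k) ℂ)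
    (hAR : A * X = Y * R) (hBS : B * X = Y * S) :
    (∃ μ : ℂ, (R - μ • S).det ≠ 0) ∧
    (∀ lam : ℂ, (R - lam • S).det = 0 → (A - lam • B).det = 0) ∧
    (∀ x : Fin k → ℂ, S *ᵥ x = 0 → R *ᵥ x ≠ 0 →
      B *ᵥ (X *ᵥ x) = 0 ∧ A *ᵥ (X *ᵥ x) ≠ 0) := by
  have hX0 : ∀ x : Fin k → ℂ, X *ᵥ x = 0 → x = 0 := by
    intro x hx
    have : X.mulVecLin x = X.mulVecLin 0 := by simpa using hx
    exact hX this
  have hY0 : ∀ x : Fin k → ℂ, Y *ᵥ x = 0 → x = 0 := by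
    intro x hx
    have : Y.mulVecLin x = Y.mulVecLin 0 := by simpa using hx
    exact hY this
  have key : ∀ μ : ℂ, (A - μ • B) * X = Y * (R - μ • S) := by
    intro μ
    rw [Matrix.sub_mul, Matrix.mul_sub, Matrix.smul_mul, hAR, hBS, Matrix.mul_smul]
  have main : ∀ μ : ℂ, (R - μ • S).det = 0 → (A - μ • B).det = 0 := by
    intro μ hdet
    obtain ⟨v, hv, hv0⟩ := (Matrix.exists_mulVec_eq_zero_iff).2 hdet
    refine (Matrix.exists_mulVec_eq_zero_iff).1 ⟨X *ᵥ v, ?_, ?_⟩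
    · intro h
      exact hv (hX0 v h)
    · rw [Matrix.mulVec_mulVec, key, ← Matrix.mulVec_mulVec, hv0, Matrix.mulVec_zero]
  refine ⟨?_, main, ?_⟩
  · obtain ⟨μ, hμ⟩ := hreg
    exact ⟨μ, fun h => hμ (main μ h)⟩
  · intro x hS hR
    constructor
    · rw [Matrix.mulVec_mulVec, hBS, ← Matrix.mulVec_mulVec, hS, Matrix.mulVec_zero]
    · rw [Matrix.mulVec_mulVec, hAR, ← Matrix.mulVec_mulVec]
      intro h
      exact hR (hY0 _ h)
end

section
/- Let A, B, C, X, Y ∈ ℂ^{n×n} satisfy A X + Y B = C and A Y^⋆ + X^⋆ B = C, where ⋆ denotes conjugate transpose. If the set σ(A^⋆ - λB) of eigenvalues of the pencil A^⋆ - λB is ⋆-reciprocal free (λᵢ λⱼ^⋆ ≠ 1 for all eigenvalues λᵢ, λⱼ, including that 0 and ∞ are not both eigenvalues), then A(X + Y^⋆) = (X + Y^⋆)^⋆ B implies X = -Y^⋆, i.e., the only matrix W with A W = W^⋆ B is W = 0. -/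
/-!
Since `0` and `∞` are not both eigenvalues, `A` or `B` is invertible, and the substitution
`(A, B) ↦ (Bᴴ, Aᴴ)` preserves `A W = Wᴴ B` while inverting the spectrum of the pencil, so we may
assume `B` invertible. Then `Z = W B⁻¹` solves the Stein equation `Kᴴ Z K = Z` for
`K = Aᴴ B⁻¹`, whose eigenvalues are those of the pencil. Iterating it gives
`p(Kᴴ) Z K^d = Z (reflect d p)(K)` for `natDegree p ≤ d`; for `p` the characteristic polynomial
of `Kᴴ` the left side vanishes, and `(reverse p)(K)` is invertible because `reverse p` is coprime
to the characteristic polynomial of `K` as soon as no eigenvalue of `K` times the conjugate of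
another one equals `1`.
-/

open Matrix

/-- The spectrum of the pencil `Aᴴ - λ B` (finite part), together with `∞` when
`det B = 0`, is ⋆-reciprocal free: no two members `λᵢ, λⱼ` satisfy `λᵢ λⱼ^⋆ = 1`
(with `0` and `∞` counted as reciprocals of each other). -/
def StarReciprocalFree {n : ℕ} (A B : Matrix (Fin n) (Fin n) ℂ) : Prop :=
  (∀ μ ν : ℂ, (Aᴴ - μ • B).det = 0 → (Aᴴ - ν • B).det = 0 →
      μ * (starRingEnd ℂ ν) ≠ 1) ∧
  ¬((Aᴴ).det = 0 ∧ B.det = 0)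

open Polynomial

section Reflect

variable {R A : Type*} [CommSemiring R] [Semiring A] [Algebra R A] {M N Z : A}

theorem pow_mul_mul_pow_eq_self (h : M * Z * N = Z) (k : ℕ) : M ^ k * Z * N ^ k = Z := by
  induction k with
  | zero => simp
  | succ k ih =>
    calc M ^ (k + 1) * Z * N ^ (k + 1) = M ^ k * (M * Z * N) * N ^ k := by
          rw [pow_succ, pow_succ']; noncomm_ring
      _ = Z := by rw [h, ih]

theorem aeval_mul_mul_pow_eq_mul_aeval_reflect (h : M * Z * N = Z) {d : ℕ} (p : R[X])
    (hp : p.natDegree ≤ d) : aeval M p * Z * N ^ d = Z * aeval N (p.reflect d) := by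
  refine induction_with_natDegree_le
    (fun p ↦ aeval M p * Z * N ^ d = Z * aeval N (p.reflect d)) d (by simp) ?_ ?_ p hp
  · intro k r _ hk
    rw [reflect_C_mul_X_pow, revAt_le hk]
    calc aeval M (C r * X ^ k) * Z * N ^ d = r • (M ^ k * Z * N ^ k * N ^ (d - k)) := by
          rw [mul_assoc (M ^ k * Z), ← pow_add, Nat.add_sub_cancel' hk]
          simp [Algebra.smul_def, mul_assoc]
      _ = Z * aeval N (C r * X ^ (d - k)) := by
          rw [pow_mul_mul_pow_eq_self h, map_mul, aeval_C, map_pow, aeval_X, ← mul_assoc,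
            ← Algebra.commutes, Algebra.smul_def, mul_assoc]
  · intro f g _ _ hf hg
    simp only [map_add, reflect_add, add_mul, mul_add, hf, hg]

end Reflect

namespace Matrix

variable {n : Type*} [Fintype n] [DecidableEq n]

theorem eval_charpolyRev_eq_det {R : Type*} [CommRing R] (M : Matrix n n R) (t : R) :
    M.charpolyRev.eval t = (1 - t • M).det := by
  rw [charpolyRev, ← coe_evalRingHom, RingHom.map_det]
  congr
  ext i j
  obtain rfl | hij := eq_or_ne i j <;> simp [*] <;> ring

variable {K : Type*} [Field K]

theorem mul_aeval_charpolyRev_eq_zero {M N Z : Matrix n n K} (h : M * Z * N = Z) :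
    Z * aeval N M.charpolyRev = 0 := by
  rw [← reverse_charpoly, reverse, ← aeval_mul_mul_pow_eq_mul_aeval_reflect h _ le_rfl,
    aeval_self_charpoly, zero_mul, zero_mul]

theorem eq_zero_of_mul_aeval_eq_zero_of_isCoprime {N Z : Matrix n n K} {q : K[X]}
    (hZ : Z * aeval N q = 0) (hq : IsCoprime q N.charpoly) : Z = 0 := by
  obtain ⟨u, v, huv⟩ := hq
  have hinv : aeval N q * aeval N u = 1 := by
    simpa [mul_comm, aeval_self_charpoly] using congrArg (aeval N) huv
  calc Z = Z * (aeval N q * aeval N u) := by rw [hinv, mul_one]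
    _ = 0 := by rw [← mul_assoc, hZ, zero_mul]

theorem eq_zero_of_mul_mul_eq_self {M N Z : Matrix n n K} (h : M * Z * N = Z)
    (hMN : IsCoprime M.charpolyRev N.charpoly) : Z = 0 :=
  eq_zero_of_mul_aeval_eq_zero_of_isCoprime (mul_aeval_charpolyRev_eq_zero h) hMN

theorem ne_zero_of_isRoot_charpolyRev {M : Matrix n n K} {t : K} (ht : M.charpolyRev.IsRoot t) :
    t ≠ 0 := by
  rintro rfl
  simp at ht

theorem isRoot_charpoly_inv_of_isRoot_charpolyRev {M : Matrix n n K} {t : K}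
    (ht : M.charpolyRev.IsRoot t) : M.charpoly.IsRoot t⁻¹ := by
  have ht0 := ne_zero_of_isRoot_charpolyRev ht
  have hsmul : 1 - t • M = t • (scalar n t⁻¹ - M) := by
    ext i j
    obtain rfl | hij := eq_or_ne i j <;> simp [*, mul_sub]
  rw [IsRoot, eval_charpolyRev_eq_det, hsmul, det_smul] at ht
  rw [IsRoot, eval_charpoly]
  simpa [ht0] using ht

theorem isCoprime_charpolyRev_charpoly [IsAlgClosed K] {M N : Matrix n n K}
    (h : ∀ s t, M.charpoly.IsRoot s → N.charpoly.IsRoot t → s * t ≠ 1) :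
    IsCoprime M.charpolyRev N.charpoly := by
  rw [isCoprime_iff_aeval_ne_zero_of_isAlgClosed K K]
  intro t
  by_contra! ⟨hM, hN⟩
  rw [coe_aeval_eq_eval] at hM hN
  exact h _ _ (isRoot_charpoly_inv_of_isRoot_charpolyRev hM) hN
    (inv_mul_cancel₀ (ne_zero_of_isRoot_charpolyRev hM))

theorem det_sub_inv_smul_eq_zero {P Q : Matrix n n K} {μ : K} (hμ : μ ≠ 0)
    (h : (Q - μ • P).det = 0) : (P - μ⁻¹ • Q).det = 0 := by
  have : P - μ⁻¹ • Q = (-μ⁻¹) • (Q - μ • P) := by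
    rw [smul_sub, smul_smul, neg_mul, inv_mul_cancel₀ hμ, neg_smul, neg_smul, one_smul]
    abel
  rw [this, det_smul, h, mul_zero]

theorem isRoot_charpoly_mul_inv_iff {P B : Matrix n n K} (hB : IsUnit B.det) (t : K) :
    (P * B⁻¹).charpoly.IsRoot t ↔ (P - t • B).det = 0 := by
  have hfac : P - t • B = -(scalar n t - P * B⁻¹) * B := by
    rw [neg_mul, sub_mul, mul_assoc, nonsing_inv_mul _ hB, mul_one, scalar_apply,
      ← smul_one_eq_diagonal, smul_mul_assoc, one_mul, neg_sub]
  rw [IsRoot, eval_charpoly, hfac, det_mul, det_neg]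
  simp [hB.ne_zero]

theorem isRoot_charpoly_conjTranspose_iff {R : Type*} [CommRing R] [StarRing R]
    (M : Matrix n n R) (t : R) : Mᴴ.charpoly.IsRoot t ↔ M.charpoly.IsRoot (star t) := by
  have : scalar n t - Mᴴ = (scalar n (star t) - M)ᴴ := by
    simp [conjTranspose_sub]
  rw [IsRoot, IsRoot, eval_charpoly, eval_charpoly, this, det_conjTranspose, star_eq_zero]

theorem conjTranspose_mul_mul_eq_self {R : Type*} [CommRing R] [StarRing R]
    {A B W : Matrix n n R} (hB : IsUnit B.det) (hW : A * W = Wᴴ * B) :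
    (Aᴴ * B⁻¹)ᴴ * (W * B⁻¹) * (Aᴴ * B⁻¹) = W * B⁻¹ := by
  have hW' : Wᴴ * Aᴴ = Bᴴ * W := by simpa [conjTranspose_mul] using congrArg conjTranspose hW
  have hBH : (Bᴴ)⁻¹ * Bᴴ = 1 := nonsing_inv_mul _ (by rwa [det_conjTranspose, isUnit_star])
  rw [conjTranspose_mul, conjTranspose_nonsing_inv, conjTranspose_conjTranspose]
  calc (Bᴴ)⁻¹ * A * (W * B⁻¹) * (Aᴴ * B⁻¹) = (Bᴴ)⁻¹ * ((A * W) * B⁻¹ * Aᴴ) * B⁻¹ := by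
        noncomm_ring
    _ = (Bᴴ)⁻¹ * (Bᴴ * W) * B⁻¹ := by
        rw [hW, mul_assoc Wᴴ, mul_nonsing_inv _ hB, mul_one, hW']
    _ = W * B⁻¹ := by rw [← mul_assoc, hBH, one_mul]

end Matrix

section Pencil

variable {n : Type*} [Fintype n] [DecidableEq n] {K : Type*} [Field K] [StarRing K]

def PencilStarReciprocalFree (P Q : Matrix n n K) : Prop :=
  ∀ μ ν : K, (P - μ • Q).det = 0 → (P - ν • Q).det = 0 → μ * starRingEnd K ν ≠ 1

theorem PencilStarReciprocalFree.swap {P Q : Matrix n n K} (h : PencilStarReciprocalFree P Q) :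
    PencilStarReciprocalFree Q P := by
  intro μ ν hμ hν
  rcases eq_or_ne μ 0 with rfl | hμ0
  · simp
  rcases eq_or_ne ν 0 with rfl | hν0
  · simp
  have := h _ _ (det_sub_inv_smul_eq_zero hμ0 hμ) (det_sub_inv_smul_eq_zero hν0 hν)
  contrapose! this
  rw [map_inv₀, ← mul_inv, this, inv_one]

theorem PencilStarReciprocalFree.eq_zero [IsAlgClosed K] {A B W : Matrix n n K}
    (hrf : PencilStarReciprocalFree Aᴴ B) (hB : IsUnit B.det) (hW : A * W = Wᴴ * B) : W = 0 := by
  have hZ : W * B⁻¹ = 0 := by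
    refine eq_zero_of_mul_mul_eq_self (conjTranspose_mul_mul_eq_self hB hW)
      (isCoprime_charpolyRev_charpoly fun s t hs ht ↦ ?_)
    rw [isRoot_charpoly_conjTranspose_iff, isRoot_charpoly_mul_inv_iff hB] at hs
    rw [isRoot_charpoly_mul_inv_iff hB] at ht
    simpa [mul_comm, starRingEnd_apply] using hrf t (star s) ht hs
  calc W = W * B⁻¹ * B := by rw [mul_assoc, nonsing_inv_mul _ hB, mul_one]
    _ = 0 := by rw [hZ, zero_mul]

end Pencil

/-- If `σ(Aᴴ - λB)` is ⋆-reciprocal free, then the only matrix `W`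
with `A W = Wᴴ B` is `W = 0`; in particular `A X + Y B = C` and `A Yᴴ + Xᴴ B = C`
force `X = -Yᴴ` whenever `A(X + Yᴴ) = (X + Yᴴ)ᴴ B`. -/
theorem starSylvester_homogeneous_unique
    (n : ℕ) (A B : Matrix (Fin n) (Fin n) ℂ)
    (hrf : StarReciprocalFree A B) :
    ∀ W : Matrix (Fin n) (Fin n) ℂ, A * W = Wᴴ * B → W = 0 := by
  intro W hW
  obtain ⟨hfin, hinf⟩ := hrf
  by_cases hB : B.det = 0
  · have hA : IsUnit (Aᴴ).det := isUnit_iff_ne_zero.2 fun hA ↦ hinf ⟨hA, hB⟩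
    refine PencilStarReciprocalFree.eq_zero (A := Bᴴ) (B := Aᴴ) ?_ hA ?_
    · simpa using PencilStarReciprocalFree.swap hfin
    · simpa [conjTranspose_mul] using congrArg conjTranspose hW.symm
  · exact PencilStarReciprocalFree.eq_zero hfin (isUnit_iff_ne_zero.2 hB) hW
end

section
/- Let A, B, C ∈ ℂ^{n×n} and set Z = [[0, B],[A, -C]] ∈ ℂ^{2n×2n}. Then the spectrum of the pencil Z^⋆ - λZ equals the union of the spectrum of A^⋆ - λB and the spectrum of B^⋆ - λA; concretely, det(Z^⋆ - λZ) = ± det(A^⋆ - λB) · det(B^⋆ - λA) up to sign. -/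
open Matrix

/-- Under `Bool × α ≃ α ⊕ α`, swapping the summands is negating the `Bool` factor, a product of
`card α` disjoint transpositions. -/
theorem Equiv.Perm.sign_sumComm_self (α : Type*) [Fintype α] [DecidableEq α] :
    Equiv.Perm.sign (Equiv.sumComm α α) = (-1) ^ Fintype.card α := by
  have hconj : ∀ x, boolProdEquivSum α (prodCongrLeft (fun _ => swap false true) x) =
      Equiv.sumComm α α (boolProdEquivSum α x) := by
    rintro ⟨_ | _, a⟩ <;> rfl
  rw [← Equiv.Perm.sign_eq_sign_of_equiv _ _ _ hconj, Equiv.Perm.sign_prodCongrLeft,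
    Equiv.Perm.sign_swap Bool.false_ne_true, Finset.prod_const, Finset.card_univ]

theorem Matrix.det_fromBlocks_zero₁₁ {n R : Type*} [Fintype n] [DecidableEq n] [CommRing R]
    (B C D : Matrix n n R) :
    (fromBlocks 0 B C D).det = (-1) ^ Fintype.card n * B.det * C.det := by
  have hswap : fromBlocks 0 B C D = (fromBlocks C D 0 B).submatrix (Equiv.sumComm n n) id := by
    ext (i | i) (j | j) <;> rfl
  rw [hswap, det_permute, Equiv.Perm.sign_sumComm_self, det_fromBlocks_zero₂₁]
  push_cast
  ring

theorem Matrix.conjTranspose_sub_smul_fromBlocks_zero₁₁ {n R : Type*} [CommRing R] [StarRing R]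
    (A B D : Matrix n n R) (lam : R) :
    (fromBlocks 0 B A D)ᴴ - lam • fromBlocks 0 B A D =
      fromBlocks 0 (Aᴴ - lam • B) (Bᴴ - lam • A) (Dᴴ - lam • D) := by
  simp only [fromBlocks_conjTranspose, conjTranspose_zero, fromBlocks_smul, smul_zero,
    sub_eq_add_neg, fromBlocks_neg, fromBlocks_add, neg_zero, add_zero]

/-- For `Z = [[0, B],[A, -C]]`, the spectrum of the pencil `Zᴴ - λ Z`
is the union of those of `Aᴴ - λB` and `Bᴴ - λA`; concretely
`det(Zᴴ - λZ) = (-1)^n det(Aᴴ - λB) det(Bᴴ - λA)`. -/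
theorem palindromic_pencil_spectrum
    (n : ℕ) (A B C : Matrix (Fin n) (Fin n) ℂ)
    (Z : Matrix (Fin n ⊕ Fin n) (Fin n ⊕ Fin n) ℂ)
    (hZ : Z = fromBlocks 0 B A (-C)) :
    ({lam : ℂ | (Zᴴ - lam • Z).det = 0}
        = {lam : ℂ | (Aᴴ - lam • B).det = 0} ∪ {lam : ℂ | (Bᴴ - lam • A).det = 0}) ∧
    (∀ lam : ℂ,
      (Zᴴ - lam • Z).det = (-1 : ℂ) ^ n * (Aᴴ - lam • B).det * (Bᴴ - lam • A).det) := by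
  have hdet : ∀ lam : ℂ,
      (Zᴴ - lam • Z).det = (-1 : ℂ) ^ n * (Aᴴ - lam • B).det * (Bᴴ - lam • A).det := by
    intro lam
    rw [hZ, conjTranspose_sub_smul_fromBlocks_zero₁₁, det_fromBlocks_zero₁₁, Fintype.card_fin]
  refine ⟨?_, hdet⟩
  ext lam
  simp [hdet lam]
end

section
/- Let 𝒜, ℬ ∈ ℂ^{2n×2n} with 𝒜 + ℬ invertible, and define the doubling transform 𝒜̂ = 𝒜(𝒜+ℬ)⁻¹𝒜 and ℬ̂ = ℬ(𝒜+ℬ)⁻¹ℬ. If W ∈ ℂ^{2n×n} and T ∈ ℂ^{n×n} satisfy 𝒜 W = ℬ W T, then 𝒜̂ W = ℬ̂ W T². -/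
open Matrix

theorem comm_inv_aux {m : Type*} [Fintype m] [DecidableEq m]
    (𝒜 ℬ : Matrix m m ℂ) (h : IsUnit (𝒜 + ℬ)) :
    𝒜 * (𝒜 + ℬ)⁻¹ * ℬ = ℬ * (𝒜 + ℬ)⁻¹ * 𝒜 := by
  have hd := (Matrix.isUnit_iff_isUnit_det _).mp h
  have h1 : 𝒜 * (𝒜 + ℬ)⁻¹ * (𝒜 + ℬ) = (𝒜 + ℬ) * ((𝒜 + ℬ)⁻¹ * 𝒜) := by
    rw [mul_assoc, Matrix.nonsing_inv_mul _ hd, Matrix.mul_nonsing_inv_cancel_left _ _ hd,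
      mul_one]
  have h2 : 𝒜 * (𝒜 + ℬ)⁻¹ * 𝒜 + 𝒜 * (𝒜 + ℬ)⁻¹ * ℬ
      = 𝒜 * (𝒜 + ℬ)⁻¹ * 𝒜 + ℬ * (𝒜 + ℬ)⁻¹ * 𝒜 := by
    rw [mul_add] at h1
    rw [← mul_assoc, add_mul, add_mul] at h1
    exact h1
  exact add_left_cancel h2

/-- doubling property. If `𝒜 W = ℬ W T` and `𝒜 + ℬ` is invertible,
then `𝒜(𝒜+ℬ)⁻¹𝒜 W = ℬ(𝒜+ℬ)⁻¹ℬ W T²`. -/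
theorem doubling_transform
    (n : ℕ) (𝒜 ℬ : Matrix (Fin n ⊕ Fin n) (Fin n ⊕ Fin n) ℂ)
    (h : IsUnit (𝒜 + ℬ))
    (W : Matrix (Fin n ⊕ Fin n) (Fin n) ℂ) (T : Matrix (Fin n) (Fin n) ℂ)
    (hW : 𝒜 * W = ℬ * W * T) :
    (𝒜 * (𝒜 + ℬ)⁻¹ * 𝒜) * W = (ℬ * (𝒜 + ℬ)⁻¹ * ℬ) * W * T ^ 2 := by
  have key := comm_inv_aux 𝒜 ℬ h
  have c1 : (𝒜 * (𝒜 + ℬ)⁻¹ * 𝒜) * W = 𝒜 * (𝒜 + ℬ)⁻¹ * (𝒜 * W) := by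
    rw [Matrix.mul_assoc]
  rw [c1, hW, ← Matrix.mul_assoc, ← Matrix.mul_assoc, key,
    Matrix.mul_assoc (ℬ * (𝒜 + ℬ)⁻¹) 𝒜 W, hW, ← Matrix.mul_assoc, ← Matrix.mul_assoc,
    Matrix.mul_assoc _ T T, ← sq]
end

section
/- Let A, B ∈ ℂ^{n×n} with A^⊤ and B upper triangular, with diagonal entries a_{ii} = (A)_{ii} and b_{ii} = (B)_{ii} satisfying: a_{11} = b_{11}, and for all (i,j) ≠ (1,1) with the property required for a simple reciprocal-free structure, a_{ii} b_{jj} ≠ 1 unless i = j = 1 (i.e., 1 is a simple eigenvalue of the pencil A^⊤ - λB and the remaining spectrum is reciprocal free). Let C ∈ ℂ^{n×n} and Z = [[0, B],[A, -C]]. Then the null space of Z^⊤ - Z has dimension exactly 2. -/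
/-!
Write `M = Aᵀ - B`, so that `Zᵀ - Z = [[0, M], [-Mᵀ, C - Cᵀ]]` and its kernel consists of the
pairs `(x, y)` with `M y = 0` and `Mᵀ x = (C - Cᵀ) y`. The matrix `M` is upper triangular with a
single vanishing diagonal entry, so `ker M` is a line. By the Fredholm alternative
`range Mᵀ = (ker M)^⊥`, and `(C - Cᵀ) y ⊥ ker M` because `ker M` is the line through `y` and
`y ⬝ (C - Cᵀ) y = 0`. So every `y ∈ ker M` extends to a kernel vector, and the kernel has
dimension `dim ker M + dim ker Mᵀ = 1 + 1`.
-/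

open Matrix Module

namespace Matrix

variable {K l m n o : Type*} [Field K] [Fintype m] [Fintype n]

theorem mem_range_mulVecLin_transpose_iff (M : Matrix m n K) (c : n → K) :
    c ∈ LinearMap.range Mᵀ.mulVecLin ↔ ∀ z ∈ LinearMap.ker M.mulVecLin, z ⬝ᵥ c = 0 := by
  classical
  have hdual : ∀ x : m → K,
      M.mulVecLin.dualMap (dotProductEquiv K m x) = dotProductEquiv K n (Mᵀ *ᵥ x) :=
    fun x => LinearMap.ext fun z => by
      simp only [LinearMap.dualMap_apply, dotProductEquiv_apply_apply, mulVecLin_apply]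
      rw [dotProduct_mulVec, mulVec_transpose]
  calc c ∈ LinearMap.range Mᵀ.mulVecLin
      ↔ dotProductEquiv K n c ∈ LinearMap.range M.mulVecLin.dualMap := by
        simp only [LinearMap.mem_range, mulVecLin_apply]
        constructor
        · rintro ⟨x, rfl⟩
          exact ⟨_, hdual x⟩
        · rintro ⟨φ, hφ⟩
          refine ⟨(dotProductEquiv K m).symm φ, (dotProductEquiv K n).injective ?_⟩
          rw [← hdual, LinearEquiv.apply_symm_apply, hφ]
    _ ↔ _ := by
        rw [LinearMap.range_dualMap_eq_dualAnnihilator_ker, Submodule.mem_dualAnnihilator]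
        simp [dotProduct_comm]

theorem mem_ker_fromBlocks_zero_iff (M : Matrix l n K) (N : Matrix o m K) (E : Matrix o n K)
    (v : m ⊕ n → K) :
    v ∈ LinearMap.ker (fromBlocks 0 M N E).mulVecLin ↔
      M *ᵥ (v ∘ Sum.inr) = 0 ∧ N *ᵥ (v ∘ Sum.inl) + E *ᵥ (v ∘ Sum.inr) = 0 := by
  rw [LinearMap.mem_ker, mulVecLin_apply, ← Sum.elim_comp_inl_inr v, fromBlocks_mulVec,
    ← Sum.elim_zero_zero, Sum.elim_eq_iff]
  simp only [zero_mulVec, zero_add, Sum.elim_comp_inl, Sum.elim_comp_inr]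

theorem finrank_ker_fromBlocks_zero (M : Matrix l n K) (N : Matrix o m K) (E : Matrix o n K)
    (hE : ∀ y ∈ LinearMap.ker M.mulVecLin, E *ᵥ y ∈ LinearMap.range N.mulVecLin) :
    finrank K (LinearMap.ker (fromBlocks 0 M N E).mulVecLin) =
      finrank K (LinearMap.ker M.mulVecLin) + finrank K (LinearMap.ker N.mulVecLin) := by
  set W := LinearMap.ker (fromBlocks 0 M N E).mulVecLin
  let π : W →ₗ[K] n → K := LinearMap.funLeft K K Sum.inr ∘ₗ W.subtype
  let ρ : LinearMap.ker π →ₗ[K] m → K :=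
    LinearMap.funLeft K K Sum.inl ∘ₗ W.subtype ∘ₗ (LinearMap.ker π).subtype
  have hπ : LinearMap.range π = LinearMap.ker M.mulVecLin := by
    ext y
    constructor
    · rintro ⟨v, rfl⟩
      exact ((mem_ker_fromBlocks_zero_iff M N E v).1 v.2).1
    · intro hy
      obtain ⟨x, hx⟩ := hE y hy
      refine ⟨⟨Sum.elim (-x) y, (mem_ker_fromBlocks_zero_iff M N E _).2 ⟨hy, ?_⟩⟩, rfl⟩
      simpa [mulVec_neg, neg_add_eq_zero] using hx
  have hρ_inj : Function.Injective ρ := by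
    rw [injective_iff_map_eq_zero]
    intro w hw
    have hinr : π w = 0 := w.2
    ext (i | i)
    · exact congr_fun hw i
    · exact congr_fun hinr i
  have hρ : LinearMap.range ρ = LinearMap.ker N.mulVecLin := by
    ext x
    constructor
    · rintro ⟨w, rfl⟩
      have hinr : (w : m ⊕ n → K) ∘ Sum.inr = 0 := w.2
      have hNE := ((mem_ker_fromBlocks_zero_iff M N E w).1 w.1.2).2
      rw [hinr, mulVec_zero, add_zero] at hNE
      exact hNE
    · intro hx
      have hW : Sum.elim x 0 ∈ W :=
        (mem_ker_fromBlocks_zero_iff M N E _).2 ⟨by simp, by simpa using hx⟩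
      exact ⟨⟨⟨Sum.elim x 0, hW⟩, LinearMap.mem_ker.2 rfl⟩, rfl⟩
  rw [← π.finrank_range_add_finrank_ker, hπ, ← LinearMap.finrank_range_of_inj hρ_inj, hρ]

theorem finrank_ker_mulVecLin_transpose (M : Matrix n n K) :
    finrank K (LinearMap.ker Mᵀ.mulVecLin) = finrank K (LinearMap.ker M.mulVecLin) := by
  have hM := M.mulVecLin.finrank_range_add_finrank_ker
  have hMt := Mᵀ.mulVecLin.finrank_range_add_finrank_ker
  have hrank := M.rank_transpose
  rw [rank, rank] at hrank
  omega

theorem dotProduct_sub_transpose_mulVec_self {R : Type*} [CommRing R] (C : Matrix n n R)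
    (y : n → R) : y ⬝ᵥ (C - Cᵀ) *ᵥ y = 0 := by
  rw [sub_mulVec, dotProduct_sub, mulVec_transpose, dotProduct_mulVec, dotProduct_comm, sub_self]

theorem mulVec_mem_range_transpose_of_finrank_ker_eq_one {M E : Matrix n n K}
    (hM : finrank K (LinearMap.ker M.mulVecLin) = 1) (hE : ∀ y, y ⬝ᵥ E *ᵥ y = 0)
    {y : n → K} (hy : y ∈ LinearMap.ker M.mulVecLin) :
    E *ᵥ y ∈ LinearMap.range Mᵀ.mulVecLin := by
  rw [mem_range_mulVecLin_transpose_iff]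
  intro z hz
  obtain ⟨v, -, hv⟩ := finrank_eq_one_iff'.1 hM
  obtain ⟨a, ha⟩ := hv ⟨y, hy⟩
  obtain ⟨b, hb⟩ := hv ⟨z, hz⟩
  have hy' : y = a • (v : n → K) := congrArg Subtype.val ha.symm
  have hz' : z = b • (v : n → K) := congrArg Subtype.val hb.symm
  simp [hy', hz', mulVec_smul, hE]

theorem finrank_ker_fromBlocks_zero_neg_transpose (M E : Matrix n n K)
    (hM : finrank K (LinearMap.ker M.mulVecLin) = 1) (hE : ∀ y, y ⬝ᵥ E *ᵥ y = 0) :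
    finrank K (LinearMap.ker (fromBlocks 0 M (-Mᵀ) E).mulVecLin) = 2 := by
  have hker : LinearMap.ker (-Mᵀ).mulVecLin = LinearMap.ker Mᵀ.mulVecLin := by
    ext; simp
  rw [finrank_ker_fromBlocks_zero, hker, finrank_ker_mulVecLin_transpose, hM]
  intro y hy
  obtain ⟨x, hx⟩ := mulVec_mem_range_transpose_of_finrank_ker_eq_one hM hE hy
  exact ⟨-x, by simpa [neg_mulVec, mulVec_neg] using hx⟩

theorem IsUpperTriangular.finrank_ker_mulVecLin_eq_one [LinearOrder n] {M : Matrix n n K}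
    (hM : M.IsUpperTriangular) {i₀ : n} (h₀ : M i₀ i₀ = 0) (hdiag : ∀ i ≠ i₀, M i i ≠ 0) :
    finrank K (LinearMap.ker M.mulVecLin) = 1 := by
  classical
  apply le_antisymm
  · let ev : LinearMap.ker M.mulVecLin →ₗ[K] K :=
      LinearMap.proj i₀ ∘ₗ (LinearMap.ker M.mulVecLin).subtype
    -- `M + diag(e_{i₀})` is invertible and agrees with `M` on vectors vanishing at `i₀`.
    have hev : Function.Injective ev := by
      rw [injective_iff_map_eq_zero]
      intro y hy
      have hy₀ : (y : n → K) i₀ = 0 := hy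
      have hMy : M *ᵥ (y : n → K) = 0 := y.2
      have hdet : (M + diagonal (Pi.single i₀ 1)).det ≠ 0 := by
        rw [det_of_isUpperTriangular (hM.add (blockTriangular_diagonal _))]
        refine Finset.prod_ne_zero_iff.2 fun i _ => ?_
        by_cases hi : i = i₀
        · simp [hi, h₀]
        · simp [hi, hdiag i hi]
      refine Subtype.ext (eq_zero_of_mulVec_eq_zero hdet ?_)
      ext i
      by_cases hi : i = i₀
      · simp [add_mulVec, hMy, mulVec_diagonal, hi, hy₀]
      · simp [add_mulVec, hMy, mulVec_diagonal, hi]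
    exact (LinearMap.finrank_le_finrank_of_injective hev).trans_eq (finrank_self K)
  · have hdet : M.det = 0 := by
      rw [det_of_isUpperTriangular hM]
      exact Finset.prod_eq_zero (Finset.mem_univ i₀) h₀
    obtain ⟨v, hv, hMv⟩ := exists_mulVec_eq_zero_iff.2 hdet
    exact Submodule.one_le_finrank_iff.2 ((Submodule.ne_bot_iff _).2 ⟨v, hMv, hv⟩)

end Matrix

theorem nullity_palindromic_critical_general
    (n : ℕ) (hn : 0 < n) (A B C : Matrix (Fin n) (Fin n) ℂ)
    (hA : (Aᵀ).BlockTriangular (id : Fin n → Fin n))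
    (hB : B.BlockTriangular (id : Fin n → Fin n))
    (h11 : A ⟨0, hn⟩ ⟨0, hn⟩ = B ⟨0, hn⟩ ⟨0, hn⟩)
    (hrf : ∀ i j : Fin n, ¬(i = ⟨0, hn⟩ ∧ j = ⟨0, hn⟩) →
      A i i * A j j ≠ B i i * B j j)
    (Z : Matrix (Fin n ⊕ Fin n) (Fin n ⊕ Fin n) ℂ)
    (hZ : Z = fromBlocks 0 B A (-C)) :
    Module.finrank ℂ (LinearMap.ker (Zᵀ - Z).mulVecLin) = 2 := by
  have hZskew : Zᵀ - Z = fromBlocks 0 (Aᵀ - B) (-(Aᵀ - B)ᵀ) (C - Cᵀ) := by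
    rw [hZ, fromBlocks_transpose, sub_eq_add_neg, fromBlocks_neg, fromBlocks_add]
    congr 1 <;> simp [sub_eq_add_neg, add_comm]
  rw [hZskew]
  refine finrank_ker_fromBlocks_zero_neg_transpose _ _ ?_ (dotProduct_sub_transpose_mulVec_self C)
  refine IsUpperTriangular.finrank_ker_mulVecLin_eq_one (hA.sub hB) (i₀ := ⟨0, hn⟩)
    (by simp [h11]) ?_
  intro i hi hAB
  have hAB' : A i i = B i i := sub_eq_zero.1 hAB
  exact hrf i i (fun h => hi h.1) (by rw [hAB'])

/-- If `Aᵀ` and `B` are upper triangular with `a₁₁ = b₁₁ ≠ 0`, `1` a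
simple eigenvalue of the pencil `Aᵀ - λB` and the remaining spectrum reciprocal free
(encoded on the diagonal entries: `aᵢᵢ aⱼⱼ ≠ bᵢᵢ bⱼⱼ` unless `i = j = 1`), then for
`Z = [[0, B],[A, -C]]` the null space of `Zᵀ - Z` has dimension exactly `2`. -/
theorem nullity_palindromic_critical
    (n : ℕ) (hn : 0 < n) (A B C : Matrix (Fin n) (Fin n) ℂ)
    (hA : (Aᵀ).BlockTriangular (id : Fin n → Fin n))
    (hB : B.BlockTriangular (id : Fin n → Fin n))
    (h11 : A ⟨0, hn⟩ ⟨0, hn⟩ = B ⟨0, hn⟩ ⟨0, hn⟩)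
    (h11ne : A ⟨0, hn⟩ ⟨0, hn⟩ ≠ 0)
    (hrf : ∀ i j : Fin n, ¬(i = ⟨0, hn⟩ ∧ j = ⟨0, hn⟩) →
      A i i * A j j ≠ B i i * B j j)
    (Z : Matrix (Fin n ⊕ Fin n) (Fin n ⊕ Fin n) ℂ)
    (hZ : Z = fromBlocks 0 B A (-C)) :
    Module.finrank ℂ (LinearMap.ker (Zᵀ - Z).mulVecLin) = 2 :=
  nullity_palindromic_critical_general n hn A B C hA hB h11 hrf Z hZ
end

section
/- Let A, B, C ∈ ℂ^{n×n}, Z = [[0, B],[A, -C]], and suppose the spectrum of A^⋆ - λB is ⋆-reciprocal free with B invertible. Suppose U, V ∈ ℂ^{n×n} and T ∈ ℂ^{n×n} satisfy Z^⋆ [U; V] = Z [U; V] T, where [U; V] has full column rank and σ(T) = σ(A^⋆ - λB) (in particular σ(T) ∩ σ(B^⋆ - λA) = ∅). Then V is invertible and X = U V⁻¹ is the unique solution of A X + X^⋆ B = C. -/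
/-!
Put `X = U V⁻¹` and `M = B⁻¹ Aᴴ`. The block rows of `Zᴴ [U; V] = Z [U; V] T` say
`V T V⁻¹ = M` and `Bᴴ X - Cᴴ = (A X - C) M`, so the residual `R = A X + Xᴴ B - C` satisfies
`Rᴴ = R M`, i.e. the Stein equation `R = Mᴴ R M`; likewise the difference `D` of two solutions
satisfies `D = (Aᴴ B⁻¹)ᴴ D M`. Both `M` and `Aᴴ B⁻¹` have spectrum `σ(Aᴴ - λB)`, and a Stein
equation `D = P D M` forces `D = 0` as soon as `αβ ≠ 1` for `α ∈ σ(P)`, `β ∈ σ(M)`: the identity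
`(1 - βP) D = P D (M - β)` turns `χ_M(M) = 0` into `q(P) D = 0` with `q(P) = ∏ (1 - βP)`
invertible. Finally `V` is invertible because an eigenvector `x` of `T` in the `T`-invariant
kernel of `V` would have `U x ≠ 0` and `Bᴴ U x = μ A U x`, putting both `μ` and `1 / μ̄`
into `σ(Aᴴ - λB)`.
-/

open Matrix

open Polynomial

variable {K : Type*} [Field K]

theorem isUnit_one_sub_smul_of_forall_mul_ne_one {A : Type*} [Ring A] [Algebra K A] {a : A}
    {β : K} (h : ∀ α ∈ spectrum K a, α * β ≠ 1) : IsUnit (1 - β • a) := by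
  rcases eq_or_ne β 0 with rfl | hβ
  · simp
  have hβinv : β⁻¹ ∉ spectrum K a := fun hα => h _ hα (inv_mul_cancel₀ hβ)
  rw [spectrum.notMem_iff, Algebra.algebraMap_eq_smul_one] at hβinv
  simpa [Units.smul_def] using
    (IsUnit.smul_sub_iff_sub_inv_smul (Units.mk0 β⁻¹ (inv_ne_zero hβ)) a).1 hβinv

namespace Matrix

variable {m : Type*} [Fintype m] [DecidableEq m]

theorem mem_spectrum_inv_mul_iff {A B : Matrix m m K} (hB : IsUnit B) {μ : K} :
    μ ∈ spectrum K (B⁻¹ * A) ↔ (A - μ • B).det = 0 := by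
  have hfac : algebraMap K _ μ - B⁻¹ * A = B⁻¹ * -(A - μ • B) := by
    rw [Algebra.algebraMap_eq_smul_one, neg_sub, Matrix.mul_sub, Matrix.mul_smul,
      nonsing_inv_mul B ((isUnit_iff_isUnit_det B).1 hB)]
  rw [spectrum.mem_iff, hfac, (isUnit_nonsing_inv_iff.2 hB).mul_left_iff, IsUnit.neg_iff,
    isUnit_iff_isUnit_det, isUnit_iff_ne_zero, not_not]

theorem spectrum_mul_comm (A B : Matrix m m K) : spectrum K (A * B) = spectrum K (B * A) := by
  ext μ
  simp only [mem_spectrum_iff_isRoot_charpoly, charpoly_mul_comm]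

theorem mem_spectrum_conjTranspose_iff [StarRing K] {A : Matrix m m K} {μ : K} :
    μ ∈ spectrum K Aᴴ ↔ star μ ∈ spectrum K A := by
  rw [← star_eq_conjTranspose, spectrum.map_star, Set.mem_star]

theorem det_conjTranspose_sub_smul_eq_zero_iff [StarRing K] {A B : Matrix m m K} {μ : K}
    (hμ : μ ≠ 0) : (Bᴴ - μ • A).det = 0 ↔ (Aᴴ - (star μ)⁻¹ • B).det = 0 := by
  have hstar : star μ ≠ 0 := star_ne_zero.2 hμ
  have hfac : (Bᴴ - μ • A)ᴴ = (-star μ) • (Aᴴ - (star μ)⁻¹ • B) := by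
    rw [conjTranspose_sub, conjTranspose_conjTranspose, conjTranspose_smul, smul_sub, smul_smul,
      neg_mul, mul_inv_cancel₀ hstar, neg_one_smul, sub_neg_eq_add, neg_smul, neg_add_eq_sub]
  rw [← star_eq_zero, ← det_conjTranspose, hfac, det_smul, mul_eq_zero,
    or_iff_right (pow_ne_zero _ (neg_ne_zero.2 hstar))]

theorem exists_eigenvector_mem_ker [IsAlgClosed K] {V T : Matrix m m K} (hV : ¬IsUnit V)
    (hT : ∀ x, V *ᵥ x = 0 → V *ᵥ (T *ᵥ x) = 0) :
    ∃ μ ∈ spectrum K T, ∃ x ≠ 0, V *ᵥ x = 0 ∧ T *ᵥ x = μ • x := by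
  have hker : ∀ x ∈ LinearMap.ker V.mulVecLin, T.mulVecLin x ∈ LinearMap.ker V.mulVecLin :=
    fun x hx => hT x hx
  have : Nontrivial (LinearMap.ker V.mulVecLin) := by
    rw [Submodule.nontrivial_iff_ne_bot, Ne, LinearMap.ker_eq_bot]
    exact fun h => hV (mulVec_injective_iff_isUnit.1 h)
  obtain ⟨μ, hμ⟩ := Module.End.exists_eigenvalue (T.mulVecLin.restrict hker)
  obtain ⟨⟨x, hVx⟩, hx⟩ := hμ.exists_hasEigenvector
  have hTx : T *ᵥ x = μ • x := by simpa using congrArg Subtype.val hx.apply_eq_smul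
  have hx0 : x ≠ 0 := by simpa using hx.2
  refine ⟨μ, ?_, x, hx0, hVx, hTx⟩
  rw [← spectrum_toLin', ← Module.End.hasEigenvalue_iff_mem_spectrum]
  exact Module.End.hasEigenvalue_of_hasEigenvector
    (Module.End.hasEigenvector_iff.2 ⟨Module.End.mem_eigenspace_iff.2 hTx, hx0⟩)

variable {P M D : Matrix m m K}

theorem exists_isUnit_mul_eq_pow_mul_mul_aeval (hD : D = P * D * M) (s : Multiset K)
    (hs : ∀ β ∈ s, ∀ α ∈ spectrum K P, α * β ≠ 1) :
    ∃ Q : Matrix m m K, IsUnit Q ∧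
      Q * D = P ^ Multiset.card s * D * aeval M (s.map fun β => X - C β).prod := by
  induction s using Multiset.induction_on with
  | empty => exact ⟨1, isUnit_one, by simp⟩
  | cons β s ih =>
    obtain ⟨Q, hQ, hQD⟩ := ih fun b hb => hs b (Multiset.mem_cons_of_mem hb)
    have hfactor : (1 - β • P) * D = P * D * (M - algebraMap K _ β) := by
      rw [Algebra.algebraMap_eq_smul_one, mul_sub, mul_smul_one, ← hD, sub_mul, one_mul,
        smul_mul_assoc]
    refine ⟨(1 - β • P) * Q,
      (isUnit_one_sub_smul_of_forall_mul_ne_one (hs β (Multiset.mem_cons_self β s))).mul hQ, ?_⟩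
    have hcomm : Commute (1 - β • P) (P ^ Multiset.card s) :=
      ((Commute.one_left P).sub_left ((Commute.refl P).smul_left β)).pow_right _
    rw [mul_assoc, hQD, ← mul_assoc, ← mul_assoc, hcomm.eq, mul_assoc (P ^ _), hfactor]
    simp only [Multiset.card_cons, Multiset.map_cons, Multiset.prod_cons, map_mul, aeval_X,
      aeval_C, map_sub, pow_succ, mul_assoc]

theorem eq_zero_of_eq_mul_mul [IsAlgClosed K]
    (hPM : ∀ α ∈ spectrum K P, ∀ β ∈ spectrum K M, α * β ≠ 1) (hD : D = P * D * M) : D = 0 := by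
  obtain ⟨Q, hQ, hQD⟩ := exists_isUnit_mul_eq_pow_mul_mul_aeval hD M.charpoly.roots
    fun β hβ α hα => hPM α hα β (mem_spectrum_iff_isRoot_charpoly.2 (isRoot_of_mem_roots hβ))
  rw [← (IsAlgClosed.splits M.charpoly).eq_prod_roots_of_monic M.charpoly_monic,
    aeval_self_charpoly, mul_zero] at hQD
  exact (hQ.mul_right_eq_zero).1 hQD

theorem residual_eq_conjTranspose_mul_mul [StarRing K] {A B C X : Matrix m m K} (hB : IsUnit B)
    (hX : Bᴴ * X - Cᴴ = (A * X - C) * (B⁻¹ * Aᴴ)) :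
    A * X + Xᴴ * B - C = (B⁻¹ * Aᴴ)ᴴ * (A * X + Xᴴ * B - C) * (B⁻¹ * Aᴴ) := by
  set M := B⁻¹ * Aᴴ
  set R := A * X + Xᴴ * B - C
  have hXBM : Xᴴ * B * M = Xᴴ * Aᴴ := by
    rw [mul_assoc, ← mul_assoc B, mul_nonsing_inv B ((isUnit_iff_isUnit_det B).1 hB), one_mul]
  have hR : Rᴴ = R * M := by
    calc Rᴴ = Xᴴ * Aᴴ + (Bᴴ * X - Cᴴ) := by
          simp only [R, conjTranspose_sub, conjTranspose_add, conjTranspose_mul,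
            conjTranspose_conjTranspose]
          abel
      _ = R * M := by
          rw [hX, ← hXBM, ← Matrix.add_mul]
          congr 1
          simp only [R]
          abel
  calc R = (R * M)ᴴ := by rw [← hR, conjTranspose_conjTranspose]
    _ = Mᴴ * R * M := by rw [conjTranspose_mul, hR, mul_assoc]

theorem fromBlocks_conjTranspose_mul_fromRows_eq_iff {R : Type*} [Ring R] [StarRing R]
    {m k : Type*} [Fintype m] [Fintype k] {A B C : Matrix m m R} {U V : Matrix m k R}
    {T : Matrix k k R} :
    (fromBlocks 0 B A (-C))ᴴ * fromRows U V = fromBlocks 0 B A (-C) * fromRows U V * T ↔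
      Aᴴ * V = B * V * T ∧ Bᴴ * U - Cᴴ * V = (A * U - C * V) * T := by
  rw [fromBlocks_conjTranspose, fromBlocks_mul_fromRows, fromBlocks_mul_fromRows, fromRows_mul,
    fromRows_ext_iff]
  simp only [conjTranspose_zero, conjTranspose_neg, Matrix.zero_mul, zero_add, Matrix.neg_mul,
    ← sub_eq_add_neg]

end Matrix

namespace StarReciprocalFree

variable {n : ℕ} {A B : Matrix (Fin n) (Fin n) ℂ}

theorem eq_zero_of_eq_conjTranspose_mul_mul (hrf : StarReciprocalFree A B) (hB : IsUnit B)
    {P D : Matrix (Fin n) (Fin n) ℂ} (hP : spectrum ℂ P = spectrum ℂ (B⁻¹ * Aᴴ))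
    (hD : D = Pᴴ * D * (B⁻¹ * Aᴴ)) : D = 0 := by
  refine eq_zero_of_eq_mul_mul (fun α hα β hβ hαβ => ?_) hD
  rw [mem_spectrum_conjTranspose_iff, hP, mem_spectrum_inv_mul_iff hB] at hα
  rw [mem_spectrum_inv_mul_iff hB] at hβ
  exact hrf.1 β (star α) hβ hα (by rwa [starRingEnd_apply, star_star, mul_comm])

theorem eq_of_mul_add_conjTranspose_mul_eq (hrf : StarReciprocalFree A B) (hB : IsUnit B)
    {X Y : Matrix (Fin n) (Fin n) ℂ} (h : A * X + Xᴴ * B = A * Y + Yᴴ * B) : X = Y := by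
  have hBdet := (isUnit_iff_isUnit_det B).1 hB
  set D := X - Y
  have hDB : Dᴴ * B = -(A * D) := by
    refine eq_neg_of_add_eq_zero_right ?_
    rw [conjTranspose_sub, Matrix.mul_sub, Matrix.sub_mul, sub_add_sub_comm, h, sub_self]
  have hDH : Dᴴ = -(A * D) * B⁻¹ := by rw [← hDB, mul_nonsing_inv_cancel_right _ _ hBdet]
  have hD : D = (Aᴴ * B⁻¹)ᴴ * D * (B⁻¹ * Aᴴ) := by
    calc D = (-(A * D) * B⁻¹)ᴴ := by rw [← hDH, conjTranspose_conjTranspose]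
      _ = -((B⁻¹)ᴴ * Dᴴ * Aᴴ) := by
        simp only [conjTranspose_mul, conjTranspose_neg, Matrix.neg_mul, mul_assoc]
      _ = (Aᴴ * B⁻¹)ᴴ * D * (B⁻¹ * Aᴴ) := by
        rw [hDH, conjTranspose_mul, conjTranspose_conjTranspose]
        simp only [Matrix.neg_mul, Matrix.mul_neg, neg_neg, mul_assoc]
  exact sub_eq_zero.1 (hrf.eq_zero_of_eq_conjTranspose_mul_mul hB (spectrum_mul_comm _ _) hD)

theorem mul_add_conjTranspose_mul_eq_of_deflating (hrf : StarReciprocalFree A B) (hB : IsUnit B)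
    {C U V T : Matrix (Fin n) (Fin n) ℂ} (hV : IsUnit V) (h₁ : Aᴴ * V = B * V * T)
    (h₂ : Bᴴ * U - Cᴴ * V = (A * U - C * V) * T) :
    A * (U * V⁻¹) + (U * V⁻¹)ᴴ * B = C := by
  have hBdet := (isUnit_iff_isUnit_det B).1 hB
  have hVdet := (isUnit_iff_isUnit_det V).1 hV
  have hTV : T * V⁻¹ = V⁻¹ * (B⁻¹ * Aᴴ) := by
    have hVT : V * T = B⁻¹ * Aᴴ * V := by
      rw [mul_assoc, h₁, mul_assoc, nonsing_inv_mul_cancel_left _ _ hBdet]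
    calc T * V⁻¹ = V⁻¹ * (V * T) * V⁻¹ := by rw [nonsing_inv_mul_cancel_left _ _ hVdet]
      _ = V⁻¹ * (B⁻¹ * Aᴴ) := by
        rw [hVT, ← mul_assoc V⁻¹, mul_nonsing_inv_cancel_right _ _ hVdet]
  have hX : Bᴴ * (U * V⁻¹) - Cᴴ = (A * (U * V⁻¹) - C) * (B⁻¹ * Aᴴ) := by
    calc Bᴴ * (U * V⁻¹) - Cᴴ = (Bᴴ * U - Cᴴ * V) * V⁻¹ := by
          rw [Matrix.sub_mul, mul_assoc, mul_nonsing_inv_cancel_right _ _ hVdet]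
      _ = (A * U - C * V) * V⁻¹ * (B⁻¹ * Aᴴ) := by rw [h₂, mul_assoc, hTV, mul_assoc]
      _ = (A * (U * V⁻¹) - C) * (B⁻¹ * Aᴴ) := by
          rw [Matrix.sub_mul, mul_assoc, mul_nonsing_inv_cancel_right _ _ hVdet]
  exact sub_eq_zero.1
    (hrf.eq_zero_of_eq_conjTranspose_mul_mul hB rfl (residual_eq_conjTranspose_mul_mul hB hX))

theorem isUnit_of_deflating (hrf : StarReciprocalFree A B) (hB : IsUnit B)
    {C U V T : Matrix (Fin n) (Fin n) ℂ} (hUV : ∀ x, U *ᵥ x = 0 → V *ᵥ x = 0 → x = 0)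
    (hT : spectrum ℂ T ⊆ {μ | (Aᴴ - μ • B).det = 0}) (h₁ : Aᴴ * V = B * V * T)
    (h₂ : Bᴴ * U - Cᴴ * V = (A * U - C * V) * T) : IsUnit V := by
  have hBinj := mulVec_injective_iff_isUnit.2 hB
  by_contra hV
  obtain ⟨μ, hμ, x, hx0, hVx, hTx⟩ := exists_eigenvector_mem_ker hV fun x hx =>
    hBinj (by rw [mulVec_mulVec, mulVec_mulVec, ← h₁, ← mulVec_mulVec, hx, mulVec_zero,
      mulVec_zero])
  have hUx : U *ᵥ x ≠ 0 := fun h => hx0 (hUV x h hVx)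
  have hpencil : (Bᴴ - μ • A) *ᵥ (U *ᵥ x) = 0 := by
    have h := congrArg (· *ᵥ x) h₂
    simp only [sub_mulVec, ← mulVec_mulVec, hVx, hTx, mulVec_smul, mulVec_zero, sub_zero] at h
    rw [sub_mulVec, smul_mulVec, h, sub_self]
  have hμ0 : μ ≠ 0 := by
    rintro rfl
    rw [zero_smul, sub_zero] at hpencil
    exact hUx (mulVec_injective_iff_isUnit.2 hB.star (by rwa [mulVec_zero]))
  have hν := (det_conjTranspose_sub_smul_eq_zero_iff hμ0).1
    (exists_mulVec_eq_zero_iff.1 ⟨_, hUx, hpencil⟩)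
  exact hrf.1 μ _ (hT hμ) hν (by simp [hμ0])

end StarReciprocalFree

/-- For `Z = [[0, B],[A, -C]]` with `σ(Aᴴ - λB)` ⋆-reciprocal free and
`B` invertible, if `Zᴴ [U; V] = Z [U; V] T` with `[U; V]` of full column rank and
`σ(T) = σ(Aᴴ - λB)`, then `V` is invertible and `X = U V⁻¹` is the unique solution
of `A X + Xᴴ B = C`. -/
theorem starSylvester_deflating_solution
    (n : ℕ) (A B C : Matrix (Fin n) (Fin n) ℂ)
    (hrf : StarReciprocalFree A B) (hB : IsUnit B)
    (U V T : Matrix (Fin n) (Fin n) ℂ)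
    (hfull : Function.Injective
      (Matrix.of (Sum.elim (fun i => U i) (fun i => V i)) :
        Matrix (Fin n ⊕ Fin n) (Fin n) ℂ).mulVecLin)
    (hdef : (fromBlocks 0 B A (-C))ᴴ * Matrix.of (Sum.elim (fun i => U i) (fun i => V i))
      = (fromBlocks 0 B A (-C)) * Matrix.of (Sum.elim (fun i => U i) (fun i => V i)) * T)
    (hT : spectrum ℂ T = {lam : ℂ | (Aᴴ - lam • B).det = 0}) :
    IsUnit V ∧ A * (U * V⁻¹) + (U * V⁻¹)ᴴ * B = C ∧
      ∀ X' : Matrix (Fin n) (Fin n) ℂ, A * X' + X'ᴴ * B = C → X' = U * V⁻¹ := by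
  have hUV : Matrix.of (Sum.elim (fun i => U i) (fun i => V i)) = fromRows U V := rfl
  rw [hUV] at hfull hdef
  obtain ⟨h₁, h₂⟩ := fromBlocks_conjTranspose_mul_fromRows_eq_iff.1 hdef
  have hker : ∀ x, U *ᵥ x = 0 → V *ᵥ x = 0 → x = 0 := fun x hUx hVx =>
    hfull (by simp [fromRows_mulVec, hUx, hVx])
  have hV := hrf.isUnit_of_deflating hB hker hT.subset h₁ h₂
  have hX := hrf.mul_add_conjTranspose_mul_eq_of_deflating hB hV h₁ h₂
  exact ⟨hV, hX, fun X' hX' => hrf.eq_of_mul_add_conjTranspose_mul_eq hB (hX'.trans hX.symm)⟩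
end

section
/- Let A, B, C ∈ ℂ^{n×n}, Z = [[0, B],[A, -C]], and suppose σ(A^⋆ - λB) ∩ σ(T₁^⋆ - λT₂) = ∅ where T₁, T₂ ∈ ℂ^{n×n}. If U₁, V₁, U₂, V₂ ∈ ℂ^{n×n} satisfy Z^⋆ [U₁; V₁] = [U₂; V₂] T₁^⋆ and Z [U₁; V₁] = [U₂; V₂] T₂, then V₁ = 0 and U₂ = 0. -/
open Matrix Polynomial


variable {n : ℕ}

lemma evalPencilAux (μ : ℂ) (P : Matrix (Fin n) (Fin n) ℂ[X]) :
    Polynomial.eval μ P.det = (P.map (Polynomial.eval μ)).det := by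
  have := RingHom.map_det (evalRingHom μ) P
  simpa [RingHom.mapMatrix_apply] using this

lemma evalPencil (M N : Matrix (Fin n) (Fin n) ℂ) (μ : ℂ) :
    Polynomial.eval μ ((M.map Polynomial.C - (X : ℂ[X]) • N.map Polynomial.C).det)
      = (M - μ • N).det := by
  rw [evalPencilAux]
  congr 1
  ext i j
  simp [Matrix.map_apply, Matrix.sub_apply, Matrix.smul_apply]
  ring

lemma eval_charpoly' (M : Matrix (Fin n) (Fin n) ℂ) (μ : ℂ) :
    M.charpoly.eval μ = (μ • 1 - M).det := by
  rw [Matrix.charpoly, evalPencilAux]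
  congr 1
  ext i j
  by_cases h : i = j <;>
    simp [charmatrix_apply, Matrix.map_apply, Matrix.sub_apply, Matrix.smul_apply,
      Matrix.one_apply, h, Matrix.diagonal_apply]

lemma powMulCommMat (S T U : Matrix (Fin n) (Fin n) ℂ) (h : S * U = U * T) (k : ℕ) :
    S ^ k * U = U * T ^ k := by
  induction k with
  | zero => simp
  | succ k ih =>
    calc S ^ (k+1) * U = S ^ k * (S * U) := by rw [pow_succ, mul_assoc]
    _ = (S ^ k * U) * T := by rw [h, mul_assoc]
    _ = U * (T ^ k * T) := by rw [ih, mul_assoc]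
    _ = U * T ^ (k + 1) := by rw [← pow_succ]

lemma aevalMulCommMat (S T U : Matrix (Fin n) (Fin n) ℂ) (h : S * U = U * T) (p : ℂ[X]) :
    (aeval S p) * U = U * (aeval T p) := by
  induction p using Polynomial.induction_on' with
  | add p q hp hq => rw [map_add, map_add, add_mul, mul_add, hp, hq]
  | monomial k c =>
    rw [aeval_monomial, aeval_monomial, mul_assoc, powMulCommMat S T U h k,
      ← mul_assoc, Algebra.commutes c U, mul_assoc]

lemma coupledUnique (A₁ B₁ A₂ B₂ U V : Matrix (Fin n) (Fin n) ℂ)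
    (hreg₁ : ∃ μ : ℂ, (A₁ - μ • B₁).det ≠ 0)
    (hreg₂ : ∃ μ : ℂ, (A₂ - μ • B₂).det ≠ 0)
    (hdisj : ∀ lam : ℂ, ¬((A₁ - lam • B₁).det = 0 ∧ (A₂ - lam • B₂).det = 0))
    (hinf : ¬(B₁.det = 0 ∧ B₂.det = 0))
    (e1 : A₁ * V = U * A₂) (e2 : B₁ * V = U * B₂) : U = 0 ∧ V = 0 := by
  classical
  set p₁ : ℂ[X] := (A₁.map Polynomial.C - (X : ℂ[X]) • B₁.map Polynomial.C).det with hp₁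
  set p₂ : ℂ[X] := (A₂.map Polynomial.C - (X : ℂ[X]) • B₂.map Polynomial.C).det with hp₂
  obtain ⟨μ₁, hμ₁⟩ := hreg₁
  obtain ⟨μ₂, hμ₂⟩ := hreg₂
  have hp₁ne : p₁ ≠ 0 := fun h => hμ₁ (by rw [← evalPencil A₁ B₁ μ₁, ← hp₁, h, eval_zero])
  have hp₂ne : p₂ ≠ 0 := fun h => hμ₂ (by rw [← evalPencil A₂ B₂ μ₂, ← hp₂, h, eval_zero])
  have hfin : ({x | p₁.IsRoot x} ∪ {x | p₂.IsRoot x}).Finite :=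
    (Polynomial.finite_setOf_isRoot hp₁ne).union (Polynomial.finite_setOf_isRoot hp₂ne)
  obtain ⟨μ, hμ⟩ := hfin.infinite_compl.nonempty
  simp only [Set.mem_compl_iff, Set.mem_union, Set.mem_setOf_eq, not_or] at hμ
  have hd₁ : (A₁ - μ • B₁).det ≠ 0 := by rw [← evalPencil A₁ B₁ μ, ← hp₁]; exact hμ.1
  have hd₂ : (A₂ - μ • B₂).det ≠ 0 := by rw [← evalPencil A₂ B₂ μ, ← hp₂]; exact hμ.2
  set A₁' := A₁ - μ • B₁ with hA₁'
  set A₂' := A₂ - μ • B₂ with hA₂'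
  have hu₁ : IsUnit A₁'.det := isUnit_iff_ne_zero.mpr hd₁
  have hu₂ : IsUnit A₂'.det := isUnit_iff_ne_zero.mpr hd₂
  have e1' : A₁' * V = U * A₂' := by
    rw [hA₁', hA₂', Matrix.sub_mul, Matrix.mul_sub, Matrix.smul_mul, Matrix.mul_smul, e1, e2]
  have hV : V = A₁'⁻¹ * (U * A₂') := by
    rw [← e1', ← Matrix.mul_assoc, Matrix.nonsing_inv_mul _ hu₁, Matrix.one_mul]
  set S := B₁ * A₁'⁻¹ with hS
  set T := B₂ * A₂'⁻¹ with hT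
  have hcomm : S * U = U * T := by
    have h1 : B₁ * (A₁'⁻¹ * (U * A₂')) = U * B₂ := by rw [← hV, e2]
    have h2 : S * U * A₂' = U * B₂ := by
      rw [hS]; simp only [Matrix.mul_assoc]; exact h1
    calc S * U = S * U * (A₂' * A₂'⁻¹) := by rw [Matrix.mul_nonsing_inv _ hu₂, Matrix.mul_one]
    _ = (S * U * A₂') * A₂'⁻¹ := by simp only [Matrix.mul_assoc]
    _ = U * B₂ * A₂'⁻¹ := by rw [h2]
    _ = U * T := by rw [hT, Matrix.mul_assoc]
  -- disjoint spectra of S and T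
  have hroots : ∀ lam : ℂ, ¬(S.charpoly.IsRoot lam ∧ T.charpoly.IsRoot lam) := by
    rintro lam ⟨hrS, hrT⟩
    have hdS : (lam • A₁' - B₁).det = 0 := by
      have : (lam • (1 : Matrix (Fin n) (Fin n) ℂ) - S).det = 0 := by
        rw [← eval_charpoly']; exact hrS
      have hfactor : lam • (1 : Matrix (Fin n) (Fin n) ℂ) - S = (lam • A₁' - B₁) * A₁'⁻¹ := by
        rw [Matrix.sub_mul, Matrix.smul_mul, Matrix.mul_nonsing_inv _ hu₁, hS]
      rw [hfactor, Matrix.det_mul] at this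
      have hinv : A₁'⁻¹.det ≠ 0 := by
        rw [Matrix.det_nonsing_inv, Ring.inverse_eq_inv']; exact inv_ne_zero hd₁
      rcases mul_eq_zero.mp this with h | h
      · exact h
      · exact absurd h hinv
    have hdT : (lam • A₂' - B₂).det = 0 := by
      have : (lam • (1 : Matrix (Fin n) (Fin n) ℂ) - T).det = 0 := by
        rw [← eval_charpoly']; exact hrT
      have hfactor : lam • (1 : Matrix (Fin n) (Fin n) ℂ) - T = (lam • A₂' - B₂) * A₂'⁻¹ := by
        rw [Matrix.sub_mul, Matrix.smul_mul, Matrix.mul_nonsing_inv _ hu₂, hT]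
      rw [hfactor, Matrix.det_mul] at this
      have hinv : A₂'⁻¹.det ≠ 0 := by
        rw [Matrix.det_nonsing_inv, Ring.inverse_eq_inv']; exact inv_ne_zero hd₂
      rcases mul_eq_zero.mp this with h | h
      · exact h
      · exact absurd h hinv
    by_cases hlam : lam = 0
    · subst hlam
      simp only [zero_smul, zero_sub, Matrix.det_neg, Fintype.card_fin] at hdS hdT
      have hne : ((-1 : ℂ) ^ n) ≠ 0 := pow_ne_zero _ (by norm_num)
      exact hinf ⟨(mul_eq_zero.mp hdS).resolve_left hne, (mul_eq_zero.mp hdT).resolve_left hne⟩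
    · set ν : ℂ := μ + lam⁻¹ with hν
      have key₁ : lam • A₁' - B₁ = lam • (A₁ - ν • B₁) := by
        rw [hA₁', hν, smul_sub, smul_sub, smul_smul, smul_smul]
        have : lam * (μ + lam⁻¹) = lam * μ + 1 := by
          field_simp
        rw [this, add_smul, one_smul]
        abel
      have key₂ : lam • A₂' - B₂ = lam • (A₂ - ν • B₂) := by
        rw [hA₂', hν, smul_sub, smul_sub, smul_smul, smul_smul]
        have : lam * (μ + lam⁻¹) = lam * μ + 1 := by
          field_simp
        rw [this, add_smul, one_smul]
        abel
      rw [key₁, Matrix.det_smul] at hdS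
      rw [key₂, Matrix.det_smul] at hdT
      have hlamn : (lam : ℂ) ^ Fintype.card (Fin n) ≠ 0 := pow_ne_zero _ hlam
      exact hdisj ν ⟨(mul_eq_zero.mp hdS).resolve_left hlamn,
        (mul_eq_zero.mp hdT).resolve_left hlamn⟩
  -- Sylvester: charpolys coprime ⇒ U = 0
  have hcop : IsCoprime S.charpoly T.charpoly := by
    rw [Polynomial.isCoprime_iff_aeval_ne_zero_of_isAlgClosed (k := ℂ) ℂ]
    intro a
    by_contra hcon
    push_neg at hcon
    exact hroots a ⟨by simpa [Polynomial.aeval_def, Polynomial.eval₂_eq_eval_map] using hcon.1,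
      by simpa [Polynomial.aeval_def, Polynomial.eval₂_eq_eval_map] using hcon.2⟩
  obtain ⟨a, b, hab⟩ := hcop
  have hTone : aeval T a * aeval T S.charpoly = 1 := by
    have := congrArg (aeval T) hab
    simpa [map_add, _root_.map_mul, Matrix.aeval_self_charpoly] using this
  have hU0 : U = 0 := by
    have h0 : U * aeval T S.charpoly = 0 := by
      rw [← aevalMulCommMat S T U hcomm, Matrix.aeval_self_charpoly, Matrix.zero_mul]
    have hcomm2 : aeval T S.charpoly * aeval T a = 1 := by
      rw [← _root_.map_mul, mul_comm, _root_.map_mul, hTone]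
    calc U = U * (aeval T S.charpoly * aeval T a) := by rw [hcomm2, Matrix.mul_one]
    _ = (U * aeval T S.charpoly) * aeval T a := by rw [Matrix.mul_assoc]
    _ = 0 := by rw [h0, Matrix.zero_mul]
  refine ⟨hU0, ?_⟩
  rw [hV, hU0, Matrix.zero_mul, Matrix.mul_zero]


/-- For `Z = [[0, B],[A, -C]]`, if the regular pencils `Aᴴ - λB` and
`T₁ᴴ - λT₂` have disjoint spectra (including `∞`), then
`Zᴴ [U₁; V₁] = [U₂; V₂] T₁ᴴ` and `Z [U₁; V₁] = [U₂; V₂] T₂` force `V₁ = 0`, `U₂ = 0`. -/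
theorem starSylvester_deflating_zero_part
    (n : ℕ) (A B C T₁ T₂ : Matrix (Fin n) (Fin n) ℂ)
    (hreg₁ : ∃ μ : ℂ, (Aᴴ - μ • B).det ≠ 0)
    (hreg₂ : ∃ μ : ℂ, (T₁ᴴ - μ • T₂).det ≠ 0)
    (hdisj : ∀ lam : ℂ, ¬((Aᴴ - lam • B).det = 0 ∧ (T₁ᴴ - lam • T₂).det = 0))
    (hinf : ¬(B.det = 0 ∧ T₂.det = 0))
    (U₁ V₁ U₂ V₂ : Matrix (Fin n) (Fin n) ℂ)
    (h1 : (fromBlocks 0 B A (-C))ᴴ * Matrix.of (Sum.elim (fun i => U₁ i) (fun i => V₁ i))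
      = Matrix.of (Sum.elim (fun i => U₂ i) (fun i => V₂ i)) * T₁ᴴ)
    (h2 : (fromBlocks 0 B A (-C)) * Matrix.of (Sum.elim (fun i => U₁ i) (fun i => V₁ i))
      = Matrix.of (Sum.elim (fun i => U₂ i) (fun i => V₂ i)) * T₂) :
    V₁ = 0 ∧ U₂ = 0 := by
  have h1' : (fromBlocks 0 B A (-C))ᴴ * fromRows U₁ V₁ = fromRows U₂ V₂ * T₁ᴴ := h1
  have h2' : (fromBlocks 0 B A (-C)) * fromRows U₁ V₁ = fromRows U₂ V₂ * T₂ := h2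
  rw [Matrix.fromBlocks_conjTranspose, Matrix.fromBlocks_mul_fromRows,
    Matrix.fromRows_mul] at h1'
  rw [Matrix.fromBlocks_mul_fromRows, Matrix.fromRows_mul] at h2'
  rw [Matrix.fromRows_ext_iff] at h1' h2'
  have e1 : Aᴴ * V₁ = U₂ * T₁ᴴ := by
    have := h1'.1
    simpa using this
  have e2 : B * V₁ = U₂ * T₂ := by
    have := h2'.1
    simpa using this
  have := coupledUnique Aᴴ B T₁ᴴ T₂ U₂ V₁ hreg₁ hreg₂ hdisj hinf e1 e2
  exact ⟨this.2, this.1⟩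
end

section
/- Let A₁ - λB₁ and A₂ - λB₂ be regular pencils of sizes n₁×n₁ and n₂×n₂ over ℂ with disjoint spectra (including ∞ appropriately: not both pencils have an infinite eigenvalue at the same 'value'). Then the only pair U, V ∈ ℂ^{n₁×n₂} satisfying A₁ U = V A₂ and B₁ U = V B₂ is U = V = 0. -/
/-!
If `B₂` is invertible, eliminating `V = B₁ U B₂⁻¹` leaves `A₁ U = B₁ U S` with `S = B₂⁻¹ A₂`, and
then `(A₁ - r B₁) U = B₁ U (S - r)` for every scalar `r`. Right multiplication by any matrix
commuting with `S` preserves this relation, so peeling off the linear factors of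
`χ_S(S) = ∏ (S - rᵢ) = 0` one at a time, each `rᵢ` being an eigenvalue of the second pencil and
hence not of the first, forces `U = 0`. If instead `B₁` is invertible, transpose everything.
-/

open Matrix Polynomial

variable {K : Type*} [Field K] {m n : Type*} [Fintype m] [DecidableEq m] [Fintype n] [DecidableEq n]

namespace Matrix

section Intertwining

variable {A B : Matrix m m K} {S : Matrix n n K} {U : Matrix m n K}

omit [DecidableEq m] [DecidableEq n] in
theorem mul_intertwines_of_commute (hU : A * U = B * U * S) {P : Matrix n n K}
    (hP : Commute S P) : A * (U * P) = B * (U * P) * S := by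
  rw [← Matrix.mul_assoc, hU, Matrix.mul_assoc, Matrix.mul_assoc, hP.eq]
  simp only [Matrix.mul_assoc]

theorem eq_zero_of_mul_sub_algebraMap_eq_zero (hU : A * U = B * U * S) {r : K}
    (hr : IsUnit (A - r • B).det) (h : U * (S - algebraMap K _ r) = 0) : U = 0 := by
  have hpencil : (A - r • B) * U = B * (U * (S - algebraMap K _ r)) := by
    simp only [Matrix.sub_mul, Matrix.mul_sub, hU, Algebra.algebraMap_eq_smul_one,
      Matrix.smul_mul, Matrix.mul_smul, Matrix.mul_one, Matrix.mul_assoc]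
  rw [h, Matrix.mul_zero] at hpencil
  rw [← nonsing_inv_mul_cancel_left (A - r • B) U hr, hpencil, Matrix.mul_zero]

theorem eq_zero_of_mul_aeval_prod_eq_zero (s : Multiset K)
    (hs : ∀ r ∈ s, IsUnit (A - r • B).det) (hU : A * U = B * U * S)
    (h : U * aeval S (s.map (X - C ·)).prod = 0) : U = 0 := by
  induction s using Multiset.induction_on generalizing U with
  | empty => simpa using h
  | cons a s ih =>
    have hroot : U * (S - algebraMap K _ a) = 0 := by
      refine ih (fun r hr ↦ hs r (Multiset.mem_cons_of_mem hr)) ?_ ?_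
      · exact mul_intertwines_of_commute hU
          ((Commute.refl S).sub_right (Algebra.commutes a S).symm)
      · simpa [Matrix.mul_assoc] using h
    exact eq_zero_of_mul_sub_algebraMap_eq_zero hU (hs a (Multiset.mem_cons_self a s)) hroot

theorem eq_zero_of_intertwines [IsAlgClosed K] (hU : A * U = B * U * S)
    (hS : ∀ r, S.charpoly.IsRoot r → IsUnit (A - r • B).det) : U = 0 := by
  refine eq_zero_of_mul_aeval_prod_eq_zero S.charpoly.roots
    (fun r hr ↦ hS r (isRoot_of_mem_roots hr)) hU ?_
  rw [← (IsAlgClosed.splits _).eq_prod_roots_of_monic (charpoly_monic S), aeval_self_charpoly,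
    Matrix.mul_zero]

end Intertwining

theorem det_sub_smul_eq_zero_of_isRoot_charpoly {A B : Matrix n n K} (hB : IsUnit B.det) {r : K}
    (hr : (B⁻¹ * A).charpoly.IsRoot r) : (A - r • B).det = 0 := by
  have hfactor : A - r • B = -(B * (scalar n r - B⁻¹ * A)) := by
    rw [Matrix.mul_sub, mul_nonsing_inv_cancel_left B A hB, scalar_apply, ← smul_one_eq_diagonal,
      Matrix.mul_smul, Matrix.mul_one, neg_sub]
  rw [hfactor, det_neg, det_mul, ← eval_charpoly, hr.eq_zero, mul_zero, mul_zero]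

theorem det_transpose_sub_smul (A B : Matrix n n K) (r : K) :
    (Aᵀ - r • Bᵀ).det = (A - r • B).det := by
  rw [← transpose_smul, ← transpose_sub, det_transpose]

theorem pencil_intertwiners_eq_zero_of_isUnit_det [IsAlgClosed K] {A₁ B₁ : Matrix m m K}
    {A₂ B₂ : Matrix n n K} (hdisj : ∀ r : K, ¬((A₁ - r • B₁).det = 0 ∧ (A₂ - r • B₂).det = 0))
    (hB₂ : IsUnit B₂.det) {U V : Matrix m n K} (hA : A₁ * U = V * A₂) (hB : B₁ * U = V * B₂) :
    U = 0 ∧ V = 0 := by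
  have hV : V = B₁ * U * B₂⁻¹ := by rw [hB, mul_nonsing_inv_cancel_right B₂ V hB₂]
  have hU : A₁ * U = B₁ * U * (B₂⁻¹ * A₂) := by rw [hA, hV, Matrix.mul_assoc (B₁ * U)]
  have hU0 : U = 0 := eq_zero_of_intertwines hU fun r hr ↦
    isUnit_iff_ne_zero.mpr fun h ↦ hdisj r ⟨h, det_sub_smul_eq_zero_of_isRoot_charpoly hB₂ hr⟩
  exact ⟨hU0, by rw [hV, hU0, Matrix.mul_zero, Matrix.zero_mul]⟩

end Matrix

theorem coupled_pencil_equations_unique_general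
    (n₁ n₂ : ℕ) (A₁ B₁ : Matrix (Fin n₁) (Fin n₁) ℂ)
    (A₂ B₂ : Matrix (Fin n₂) (Fin n₂) ℂ)
    (hdisj : ∀ lam : ℂ, ¬((A₁ - lam • B₁).det = 0 ∧ (A₂ - lam • B₂).det = 0))
    (hinf : ¬(B₁.det = 0 ∧ B₂.det = 0))
    (U V : Matrix (Fin n₁) (Fin n₂) ℂ)
    (hA : A₁ * U = V * A₂) (hB : B₁ * U = V * B₂) :
    U = 0 ∧ V = 0 := by
  by_cases hB₂ : B₂.det = 0
  · have hB₁ : IsUnit B₁.det := isUnit_iff_ne_zero.mpr fun hB₁ ↦ hinf ⟨hB₁, hB₂⟩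
    have hdisj_transpose : ∀ r : ℂ, ¬((A₂ᵀ - r • B₂ᵀ).det = 0 ∧ (A₁ᵀ - r • B₁ᵀ).det = 0) := by
      simpa only [det_transpose_sub_smul, and_comm] using hdisj
    obtain ⟨hV, hU⟩ := pencil_intertwiners_eq_zero_of_isUnit_det hdisj_transpose
      (by rwa [det_transpose]) (by rw [← transpose_mul, ← hA, transpose_mul])
      (by rw [← transpose_mul, ← hB, transpose_mul])
    exact ⟨transpose_eq_zero.mp hU, transpose_eq_zero.mp hV⟩
  · exact pencil_intertwiners_eq_zero_of_isUnit_det hdisj (isUnit_iff_ne_zero.mpr hB₂) hA hB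

/-- If `A₁ - λB₁` and `A₂ - λB₂` are regular pencils with disjoint
spectra (including `∞`), then `A₁ U = V A₂` and `B₁ U = V B₂` imply `U = V = 0`. -/
theorem coupled_pencil_equations_unique
    (n₁ n₂ : ℕ) (A₁ B₁ : Matrix (Fin n₁) (Fin n₁) ℂ)
    (A₂ B₂ : Matrix (Fin n₂) (Fin n₂) ℂ)
    (hreg₁ : ∃ μ : ℂ, (A₁ - μ • B₁).det ≠ 0)
    (hreg₂ : ∃ μ : ℂ, (A₂ - μ • B₂).det ≠ 0)
    (hdisj : ∀ lam : ℂ, ¬((A₁ - lam • B₁).det = 0 ∧ (A₂ - lam • B₂).det = 0))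
    (hinf : ¬(B₁.det = 0 ∧ B₂.det = 0))
    (U V : Matrix (Fin n₁) (Fin n₂) ℂ)
    (hA : A₁ * U = V * A₂) (hB : B₁ * U = V * B₂) :
    U = 0 ∧ V = 0 :=
  coupled_pencil_equations_unique_general n₁ n₂ A₁ B₁ A₂ B₂ hdisj hinf U V hA hB
end

section
/- Let A, B ∈ ℂ^{n×n} such that every eigenvalue λ of the pencil A^⋆ - λB satisfies |λ| < 1 and det B ≠ 0 (all eigenvalues lie strictly inside the unit circle). Then σ(A^⋆ - λB) is ⋆-reciprocal free, and consequently for each C ∈ ℂ^{n×n} the equation A X + X^⋆ B = C has at most one solution X ∈ ℂ^{n×n}. -/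
/-!
Put `S = B⁻¹ * Aᴴ`. Since `Aᴴ - λ B = B (S - λ)`, the eigenvalues of the pencil are those of `S`,
so `S` has spectral radius `< 1`; the reciprocal-free part is just `|μ ν̄| < 1`. If
`A W + Wᴴ B = 0` then `V = Bᴴ W` satisfies `V = Sᴴ V S`, hence `V = (Sᴴ)ᵏ V Sᵏ` for all `k`.
By Gelfand's formula some power has `‖Sᵏ‖ < 1` in the L2 operator norm, a C*-norm, so
`‖V‖ ≤ ‖Sᵏ‖² ‖V‖` forces `V = 0`, i.e. `W = 0`.
-/

open Matrix Filter ENNReal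

section BanachAlgebra

variable {A : Type*} [NormedRing A] [NormedAlgebra ℂ A] [CompleteSpace A]

theorem spectralRadius_lt_one_of_forall_norm_lt_one {a : A}
    (ha : ∀ z ∈ spectrum ℂ a, ‖z‖ < 1) : spectralRadius ℂ a < 1 := by
  rcases subsingleton_or_nontrivial A with _ | _
  · simp
  · exact_mod_cast spectrum.spectralRadius_lt_of_forall_lt a (r := 1) fun z hz =>
      mod_cast ha z hz

theorem exists_norm_pow_lt_one_of_spectralRadius_lt_one {a : A}
    (ha : spectralRadius ℂ a < 1) : ∃ k, ‖a ^ k‖ < 1 := by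
  obtain ⟨k, hk, hk0⟩ :=
    (((spectrum.pow_nnnorm_pow_one_div_tendsto_nhds_spectralRadius a).eventually
      (gt_mem_nhds ha)).and (eventually_ne_atTop 0)).exists
  refine ⟨k, ?_⟩
  rw [← one_rpow (1 / k : ℝ), rpow_lt_rpow_iff (by positivity)] at hk
  exact_mod_cast hk

theorem star_pow_mul_mul_pow_eq {R : Type*} [Monoid R] [StarMul R] {a v : R}
    (hv : star a * v * a = v) (k : ℕ) : star (a ^ k) * v * a ^ k = v := by
  induction k with
  | zero => simp
  | succ k ih =>
    calc star (a ^ (k + 1)) * v * a ^ (k + 1) = star (a ^ k) * (star a * v * a) * a ^ k := by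
          simp only [pow_succ', star_mul, mul_assoc]
      _ = v := by rw [hv, ih]

theorem eq_zero_of_star_mul_mul_self_eq [StarRing A] [NormedStarGroup A] {a v : A}
    (ha : spectralRadius ℂ a < 1) (hv : star a * v * a = v) : v = 0 := by
  obtain ⟨k, hk⟩ := exists_norm_pow_lt_one_of_spectralRadius_lt_one ha
  have hle : ‖v‖ ≤ ‖a ^ k‖ ^ 2 * ‖v‖ := calc
    ‖v‖ = ‖star (a ^ k) * v * a ^ k‖ := by rw [star_pow_mul_mul_pow_eq hv]
    _ ≤ ‖star (a ^ k)‖ * ‖v‖ * ‖a ^ k‖ := norm_mul₃_le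
    _ = ‖a ^ k‖ ^ 2 * ‖v‖ := by rw [norm_star]; ring
  have hk2 : ‖a ^ k‖ ^ 2 < 1 := pow_lt_one₀ (norm_nonneg _) hk two_ne_zero
  exact norm_le_zero_iff.mp (by nlinarith [norm_nonneg v])

end BanachAlgebra

section Pencil

variable {n : Type*} [Fintype n] [DecidableEq n]

theorem mem_spectrum_nonsing_inv_mul_iff {K : Type*} [Field K] {B M : Matrix n n K}
    (hB : B.det ≠ 0) {z : K} : z ∈ spectrum K (B⁻¹ * M) ↔ (M - z • B).det = 0 := by
  have hfac : M - z • B = B * -(algebraMap K _ z - B⁻¹ * M) := by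
    rw [neg_sub, mul_sub, ← mul_assoc, mul_nonsing_inv _ (isUnit_iff_ne_zero.mpr hB), one_mul,
      Algebra.algebraMap_eq_smul_one, mul_smul_comm, mul_one]
  rw [spectrum.mem_iff, hfac, det_mul, det_neg, isUnit_iff_isUnit_det, isUnit_iff_ne_zero]
  simp [hB]

theorem conjTranspose_mul_mul_eq_of_mul_add_conjTranspose_mul_eq_zero {R : Type*} [CommRing R]
    [StarRing R] {A B W : Matrix n n R} (hB : IsUnit B.det) (h : A * W + Wᴴ * B = 0) :
    (B⁻¹ * Aᴴ)ᴴ * (Bᴴ * W) * (B⁻¹ * Aᴴ) = Bᴴ * W := by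
  have hBH : IsUnit Bᴴ.det := by rw [det_conjTranspose]; exact hB.star
  have hAW : A * W = -(Wᴴ * B) := eq_neg_of_add_eq_zero_left h
  calc (B⁻¹ * Aᴴ)ᴴ * (Bᴴ * W) * (B⁻¹ * Aᴴ) = A * (Bᴴ⁻¹ * Bᴴ) * W * (B⁻¹ * Aᴴ) := by
        simp only [conjTranspose_mul, conjTranspose_conjTranspose, conjTranspose_nonsing_inv,
          mul_assoc]
    _ = -(Wᴴ * B) * (B⁻¹ * Aᴴ) := by rw [nonsing_inv_mul _ hBH, mul_one, hAW]
    _ = -(Wᴴ * Aᴴ) := by rw [neg_mul, mul_assoc, ← mul_assoc B, mul_nonsing_inv _ hB, one_mul]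
    _ = Bᴴ * W := by simpa using congrArg (-·ᴴ) hAW

open scoped Matrix.Norms.L2Operator in
theorem eq_zero_of_mul_add_conjTranspose_mul_eq_zero {A B W : Matrix n n ℂ} (hB : B.det ≠ 0)
    (hstab : ∀ z : ℂ, (Aᴴ - z • B).det = 0 → ‖z‖ < 1) (h : A * W + Wᴴ * B = 0) : W = 0 := by
  have hS : spectralRadius ℂ (B⁻¹ * Aᴴ) < 1 := spectralRadius_lt_one_of_forall_norm_lt_one
    fun z hz => hstab z ((mem_spectrum_nonsing_inv_mul_iff hB).1 hz)
  have hV : Bᴴ * W = 0 := eq_zero_of_star_mul_mul_self_eq hS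
    (conjTranspose_mul_mul_eq_of_mul_add_conjTranspose_mul_eq_zero (isUnit_iff_ne_zero.2 hB) h)
  have hBH : IsUnit Bᴴ.det := by rw [det_conjTranspose]; exact (isUnit_iff_ne_zero.2 hB).star
  simpa [← mul_assoc, nonsing_inv_mul _ hBH] using congrArg (Bᴴ⁻¹ * ·) hV

end Pencil

theorem starReciprocalFree_of_forall_norm_lt_one {n : ℕ} {A B : Matrix (Fin n) (Fin n) ℂ}
    (hB : B.det ≠ 0) (hstab : ∀ z : ℂ, (Aᴴ - z • B).det = 0 → ‖z‖ < 1) :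
    StarReciprocalFree A B := by
  refine ⟨fun μ ν hμ hν hμν => ?_, fun h => hB h.2⟩
  have hlt : ‖μ * starRingEnd ℂ ν‖ < 1 := by
    rw [norm_mul, Complex.norm_conj]
    exact mul_lt_one_of_nonneg_of_lt_one_left (norm_nonneg _) (hstab μ hμ) (hstab ν hν).le
  simp [hμν] at hlt

/-- If all eigenvalues of `Aᴴ - λB` lie strictly inside the unit circle
and `det B ≠ 0`, then `σ(Aᴴ - λB)` is ⋆-reciprocal free, and for each `C` the
⋆-Sylvester equation `A X + Xᴴ B = C` has at most one solution. -/
theorem stable_pencil_unique_solution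
    (n : ℕ) (A B : Matrix (Fin n) (Fin n) ℂ)
    (hB : B.det ≠ 0)
    (hstab : ∀ lam : ℂ, (Aᴴ - lam • B).det = 0 → ‖lam‖ < 1) :
    StarReciprocalFree A B ∧
    ∀ C X₁ X₂ : Matrix (Fin n) (Fin n) ℂ,
      A * X₁ + X₁ᴴ * B = C → A * X₂ + X₂ᴴ * B = C → X₁ = X₂ := by
  refine ⟨starReciprocalFree_of_forall_norm_lt_one hB hstab, fun C X₁ X₂ h₁ h₂ => ?_⟩
  have hW : A * (X₁ - X₂) + (X₁ - X₂)ᴴ * B = 0 := by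
    rw [mul_sub, conjTranspose_sub, sub_mul, sub_add_sub_comm, h₁, h₂, sub_self]
  exact sub_eq_zero.mp (eq_zero_of_mul_add_conjTranspose_mul_eq_zero hB hstab hW)
end
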